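/- arXiv:math/0408237 — 3 statements merged into one kernel-verified Lean document; each statement's English description precedes it below -/
import Mathlib

section
/- Let F be a conformal diffeomorphism of planar domains and γ̂_{λ,θ,η} a uniformly anisotropic conductivity on Ω. Then F_*γ̂_{λ,θ,η} is again a uniformly anisotropic conductivity γ̂_{λ,θ₀,η₀} on F(Ω) with the same constant λ and with η₀ = η ∘ F⁻¹. -/
open Matrix

/-- Rotation matrix by angle `t`. -/
noncomputable def Rot (t : ℝ) : Matrix (Fin 2) (Fin 2) ℝ :=
  !![Real.cos t, Real.sin t; -Real.sin t, Real.cos t]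

/-- The uniformly anisotropic conductivity `γ̂_{λ,θ,η}`. -/
noncomputable def gammaHat (l : ℝ) (th eta : (Fin 2 → ℝ) → ℝ) (x : Fin 2 → ℝ) :
    Matrix (Fin 2) (Fin 2) ℝ :=
  eta x • (Rot (th x) * !![Real.sqrt l, 0; 0, (Real.sqrt l)⁻¹] * (Rot (th x))⁻¹)

/-- Push-forward of a matrix conductivity. -/
noncomputable def pushfwd (Finv : (Fin 2 → ℝ) → (Fin 2 → ℝ))
    (J : (Fin 2 → ℝ) → Matrix (Fin 2) (Fin 2) ℝ)
    (γ : (Fin 2 → ℝ) → Matrix (Fin 2) (Fin 2) ℝ) (x : Fin 2 → ℝ) :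
    Matrix (Fin 2) (Fin 2) ℝ :=
  |(J (Finv x)).det|⁻¹ • (J (Finv x) * γ (Finv x) * (J (Finv x))ᵀ)

/-! The Jacobian `r • Rot α` of a conformal map contributes the factor `r²` both to
`J γ Jᵀ` and to `|det J|`, so the push-forward is conjugation by `Rot α`. Since rotations
commute, this only turns the principal axes of `γ̂` by `α`, keeping the eigenvalues
`λ^{±1/2}` and the scalar factor `η`. -/

lemma Rot_add (a b : ℝ) : Rot (a + b) = Rot a * Rot b := by
  ext i j
  fin_cases i <;> fin_cases j <;>
    simp [Rot, Matrix.mul_apply, Real.cos_add, Real.sin_add] <;> ring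

lemma Rot_zero : Rot 0 = 1 := by
  ext i j
  fin_cases i <;> fin_cases j <;> simp [Rot]

lemma Rot_inv (t : ℝ) : (Rot t)⁻¹ = Rot (-t) :=
  inv_eq_right_inv (by rw [← Rot_add, add_neg_cancel, Rot_zero])

lemma Rot_transpose (t : ℝ) : (Rot t)ᵀ = Rot (-t) := by
  ext i j
  fin_cases i <;> fin_cases j <;> simp [Rot]

lemma Rot_det (t : ℝ) : (Rot t).det = 1 := by
  simp [Rot, Matrix.det_fin_two_of, ← sq, Real.cos_sq_add_sin_sq]

lemma Rot_mul_conj_Rot_mul_transpose (α t : ℝ) (D : Matrix (Fin 2) (Fin 2) ℝ) :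
    Rot α * (Rot t * D * (Rot t)⁻¹) * (Rot α)ᵀ = Rot (α + t) * D * (Rot (α + t))⁻¹ := by
  rw [Rot_inv, Rot_inv, Rot_transpose, neg_add_rev, Rot_add, Rot_add]
  simp only [Matrix.mul_assoc]

lemma abs_det_inv_smul_conformal_mul_mul_transpose {r : ℝ} (hr : r ≠ 0) (α : ℝ)
    (A : Matrix (Fin 2) (Fin 2) ℝ) :
    |(r • Rot α).det|⁻¹ • (r • Rot α * A * (r • Rot α)ᵀ) = Rot α * A * (Rot α)ᵀ := by
  have hscale : |r ^ 2|⁻¹ * (r * r) = 1 := by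
    rw [abs_of_nonneg (sq_nonneg r), ← sq, inv_mul_cancel₀ (pow_ne_zero 2 hr)]
  rw [Matrix.det_smul, Rot_det, Fintype.card_fin, mul_one, Matrix.transpose_smul]
  simp only [Matrix.smul_mul, Matrix.mul_smul, smul_smul, hscale, one_smul]

theorem conformal_pushforward_gammaHat_general
    (Ω : Set (Fin 2 → ℝ)) (F Finv : (Fin 2 → ℝ) → (Fin 2 → ℝ))
    (J : (Fin 2 → ℝ) → Matrix (Fin 2) (Fin 2) ℝ)
    (hFinv : ∀ y ∈ Ω, Finv (F y) = y)
    (hconf : ∀ y ∈ Ω, ∃ r α : ℝ, 0 < r ∧ J y = r • Rot α)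
    (l : ℝ) (th eta : (Fin 2 → ℝ) → ℝ) :
    ∃ th0 : (Fin 2 → ℝ) → ℝ, ∀ x ∈ F '' Ω,
      pushfwd Finv J (gammaHat l th eta) x = gammaHat l th0 (eta ∘ Finv) x := by
  choose! r α hr hJ using hconf
  refine ⟨fun x => α (Finv x) + th (Finv x), ?_⟩
  rintro x ⟨y, hy, rfl⟩
  simp only [pushfwd, gammaHat, Function.comp_apply, hFinv y hy, hJ y hy]
  rw [abs_det_inv_smul_conformal_mul_mul_transpose (hr y hy).ne', Matrix.mul_smul,
    Matrix.smul_mul, Rot_mul_conj_Rot_mul_transpose]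

/-- the push-forward of a uniformly anisotropic conductivity `γ̂_{λ,θ,η}` under
a conformal diffeomorphism `F` is `γ̂_{λ,θ₀,η∘F⁻¹}` for some angle function `θ₀`. -/
theorem conformal_pushforward_gammaHat
    (Ω : Set (Fin 2 → ℝ)) (F Finv : (Fin 2 → ℝ) → (Fin 2 → ℝ))
    (J : (Fin 2 → ℝ) → Matrix (Fin 2) (Fin 2) ℝ)
    (hbij : Set.BijOn F Ω (F '' Ω))
    (hFinv : ∀ y ∈ Ω, Finv (F y) = y) (hFinvmem : ∀ x ∈ F '' Ω, Finv x ∈ Ω)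
    (hconf : ∀ y ∈ Ω, ∃ r α : ℝ, 0 < r ∧ J y = r • Rot α)
    (l : ℝ) (hl : 1 ≤ l) (th eta : (Fin 2 → ℝ) → ℝ) (heta : ∀ y ∈ Ω, 0 < eta y) :
    ∃ th0 : (Fin 2 → ℝ) → ℝ, ∀ x ∈ F '' Ω,
      pushfwd Finv J (gammaHat l th eta) x = gammaHat l th0 (eta ∘ Finv) x :=
  conformal_pushforward_gammaHat_general Ω F Finv J hFinv hconf l th eta
end

section
/- If F is a quasiconformal map of the unit disk with complex dilatation μ_F and σ is an isotropic conductivity on the disk, then the anisotropy of the push-forward σ̃ = F_*σ satisfies K(σ̃, x) = |μ_F(F⁻¹(x))| for x in the disk, and hence K(σ̃) = ‖μ_F‖_{L^∞}. -/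
open Matrix Polynomial

/-- Push-forward of a matrix conductivity over a planar (complex) domain. -/
noncomputable def pushfwdC (Finv : ℂ → ℂ) (J : ℂ → Matrix (Fin 2) (Fin 2) ℝ)
    (σ : ℂ → Matrix (Fin 2) (Fin 2) ℝ) (x : ℂ) : Matrix (Fin 2) (Fin 2) ℝ :=
  |(J (Finv x)).det|⁻¹ • (J (Finv x) * σ (Finv x) * (J (Finv x))ᵀ)

/-- The anisotropy `K = (√L − 1)/(√L + 1)` for eigenvalue ratio `L = λ₁/λ₂`. -/
noncomputable def aniso (l1 l2 : ℝ) : ℝ :=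
  (Real.sqrt (l1 / l2) - 1) / (Real.sqrt (l1 / l2) + 1)

/-! At `z = F⁻¹ x` let `A` be the Jacobian matrix of `F`. The push-forward of `s • 1` is
`(s / |det A|) • A Aᵀ`; its eigenvalues have sum `s tr (A Aᵀ) / |det A|` and product `s²`, so
`K² = (tr (A Aᵀ) - 2 |det A|) / (tr (A Aᵀ) + 2 |det A|)` whatever `s` is. In terms of the Wirtinger
derivatives, `tr (A Aᵀ) = 2 (|∂F|² + |∂̄F|²)` and `det A = |∂F|² - |∂̄F|²`, and the Beltrami
equation `∂̄F = μ ∂F` with `|μ| < 1` turns the ratio into `|μ|²`. The statement about suprema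
follows because `F⁻¹` maps the disk onto itself. -/

lemma Matrix.trace_eq_add_and_det_eq_mul_of_charpoly_eq {R : Type*} [CommRing R] [Nontrivial R]
    {M : Matrix (Fin 2) (Fin 2) R} {a b : R} (h : M.charpoly = (X - C a) * (X - C b)) :
    M.trace = a + b ∧ M.det = a * b := by
  have hexpand : (X - C a) * (X - C b) = X ^ 2 - C (a + b) * X + C (a * b) := by
    simp only [map_add, map_mul]; ring
  rw [charpoly_fin_two, hexpand] at h
  have h1 := congrArg (coeff · 1) h
  have h0 := congrArg (coeff · 0) h
  simp only [coeff_add, coeff_sub, coeff_X_pow, OfNat.one_ne_ofNat, ↓reduceIte, coeff_mul_X,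
    coeff_C_zero, zero_sub, coeff_C_succ, add_zero, map_add, map_mul, neg_add_rev, coeff_mul_C,
    zero_mul, OfNat.zero_ne_ofNat, mul_coeff_zero, coeff_X_zero, mul_zero, sub_self, zero_add]
    at h1 h0
  exact ⟨by linear_combination -h1, h0⟩

lemma aniso_eq_sqrt {m1 m2 : ℝ} (h2 : 0 < m2) (h12 : m2 ≤ m1) :
    aniso m1 m2 = √((m1 + m2 - 2 * √(m1 * m2)) / (m1 + m2 + 2 * √(m1 * m2))) := by
  have h1 : 0 < m1 := h2.trans_le h12
  have hratio : aniso m1 m2 = (√m1 - √m2) / (√m1 + √m2) := by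
    have : 0 < √m2 := Real.sqrt_pos.2 h2
    rw [aniso, Real.sqrt_div' m1 h2.le]
    field_simp
  have hnonneg : 0 ≤ (√m1 - √m2) / (√m1 + √m2) :=
    div_nonneg (sub_nonneg.2 (Real.sqrt_le_sqrt h12)) (by positivity)
  rw [hratio, Real.sqrt_mul h1.le, ← Real.sqrt_sq hnonneg, div_pow, sub_sq, add_sq,
    Real.sq_sqrt h1.le, Real.sq_sqrt h2.le]
  ring_nf

lemma Matrix.trace_inv_abs_det_smul_mul_smul_one_mul_transpose {n : Type*} [Fintype n]
    [DecidableEq n] (A : Matrix n n ℝ) (s : ℝ) :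
    (|A.det|⁻¹ • (A * (s • 1) * Aᵀ)).trace = s / |A.det| * (A * Aᵀ).trace := by
  rw [Matrix.mul_smul, Matrix.mul_one, Matrix.smul_mul, smul_smul, trace_smul, smul_eq_mul,
    div_eq_inv_mul]

section IsotropicPushforward

variable {A : Matrix (Fin 2) (Fin 2) ℝ} {s m1 m2 : ℝ}

lemma Matrix.det_inv_abs_det_smul_mul_smul_one_mul_transpose (hA : A.det ≠ 0) :
    (|A.det|⁻¹ • (A * (s • 1) * Aᵀ)).det = s ^ 2 := by
  rw [det_smul, det_mul, det_mul, det_transpose, det_smul, det_one, Fintype.card_fin, inv_pow,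
    sq_abs]
  field_simp

lemma Matrix.det_ne_zero_of_charpoly_inv_abs_det_smul {N : Matrix (Fin 2) (Fin 2) ℝ}
    (hcp : (|A.det|⁻¹ • N).charpoly = (X - C m1) * (X - C m2)) (hm : m1 * m2 ≠ 0) :
    A.det ≠ 0 := by
  intro hA
  have hscale : |A.det|⁻¹ = 0 := by simp [hA]
  rw [hscale, zero_smul] at hcp
  have hdet := (trace_eq_add_and_det_eq_mul_of_charpoly_eq hcp).2
  rw [det_zero] at hdet
  exact hm hdet.symm

/-- The right-hand side is `(σ₁ - σ₂) / (σ₁ + σ₂)` for the singular values `σ₁ ≥ σ₂` of `A`. -/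
lemma aniso_eq_of_charpoly_inv_abs_det_smul (hA : A.det ≠ 0) (hs : 0 < s) (h2 : 0 < m2)
    (h12 : m2 ≤ m1) (hcp : (|A.det|⁻¹ • (A * (s • 1) * Aᵀ)).charpoly = (X - C m1) * (X - C m2)) :
    aniso m1 m2 =
      √(((A * Aᵀ).trace - 2 * |A.det|) / ((A * Aᵀ).trace + 2 * |A.det|)) := by
  obtain ⟨htr, hdet⟩ := trace_eq_add_and_det_eq_mul_of_charpoly_eq hcp
  rw [aniso_eq_sqrt h2 h12, ← htr, ← hdet, trace_inv_abs_det_smul_mul_smul_one_mul_transpose,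
    det_inv_abs_det_smul_mul_smul_one_mul_transpose hA, Real.sqrt_sq hs.le]
  have habs : 0 < |A.det| := abs_pos.2 hA
  congr 1
  field_simp

end IsotropicPushforward

section Beltrami

open Complex

/-- The real matrix of the `ℝ`-linear map `ℂ → ℂ` sending `1 ↦ a` and `I ↦ b`. -/
def Complex.reImMatrix (a b : ℂ) : Matrix (Fin 2) (Fin 2) ℝ :=
  !![a.re, b.re; a.im, b.im]

variable {a b μ : ℂ}

lemma Complex.det_reImMatrix (a b : ℂ) :
    (reImMatrix a b).det = normSq ((a - I * b) / 2) - normSq ((a + I * b) / 2) := by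
  simp [reImMatrix, det_fin_two_of, normSq_apply]
  ring

lemma Complex.trace_reImMatrix_mul_transpose (a b : ℂ) :
    (reImMatrix a b * (reImMatrix a b)ᵀ).trace =
      2 * (normSq ((a - I * b) / 2) + normSq ((a + I * b) / 2)) := by
  simp [reImMatrix, trace, vecMul, dotProduct, Fin.sum_univ_two, normSq_apply]
  ring

lemma Complex.distortion_reImMatrix_eq_norm_sq (hμ : ‖μ‖ < 1)
    (hbeltrami : (a + I * b) / 2 = μ * ((a - I * b) / 2)) (hA : (reImMatrix a b).det ≠ 0) :
    ((reImMatrix a b * (reImMatrix a b)ᵀ).trace - 2 * |(reImMatrix a b).det|) /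
      ((reImMatrix a b * (reImMatrix a b)ᵀ).trace + 2 * |(reImMatrix a b).det|) = ‖μ‖ ^ 2 := by
  rw [det_reImMatrix] at hA ⊢
  rw [trace_reImMatrix_mul_transpose]
  rw [hbeltrami, normSq_mul, normSq_eq_norm_sq μ] at hA ⊢
  set P := normSq ((a - I * b) / 2)
  have hP : 0 < P := (normSq_nonneg _).lt_of_ne' fun h : P = 0 => hA (by rw [h]; ring)
  have hμ2 : ‖μ‖ ^ 2 < 1 := pow_lt_one₀ (norm_nonneg μ) hμ two_ne_zero
  rw [abs_of_pos (by nlinarith)]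
  field_simp
  ring

lemma Complex.aniso_eq_norm_of_charpoly_pushforward {s m1 m2 : ℝ} (hs : 0 < s) (hμ : ‖μ‖ < 1)
    (hbeltrami : (a + I * b) / 2 = μ * ((a - I * b) / 2)) (h2 : 0 < m2) (h12 : m2 ≤ m1)
    (hcp : (|(reImMatrix a b).det|⁻¹ • (reImMatrix a b * (s • 1) * (reImMatrix a b)ᵀ)).charpoly =
      (X - C m1) * (X - C m2)) :
    aniso m1 m2 = ‖μ‖ := by
  have hA := det_ne_zero_of_charpoly_inv_abs_det_smul hcp (mul_pos (h2.trans_le h12) h2).ne'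
  rw [aniso_eq_of_charpoly_inv_abs_det_smul hA hs h2 h12 hcp,
    distortion_reImMatrix_eq_norm_sq hμ hbeltrami hA, Real.sqrt_sq (norm_nonneg μ)]

end Beltrami

theorem qc_pushforward_anisotropy_general
    (F Finv : ℂ → ℂ) (μ : ℂ → ℂ) (J : ℂ → Matrix (Fin 2) (Fin 2) ℝ)
    (hbij : Set.BijOn F (Metric.ball (0:ℂ) 1) (Metric.ball (0:ℂ) 1))
    (hFinv : ∀ z ∈ Metric.ball (0:ℂ) 1, Finv (F z) = z)
    (hFinvmem : ∀ x ∈ Metric.ball (0:ℂ) 1, Finv x ∈ Metric.ball (0:ℂ) 1)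
    (hJ : ∀ z ∈ Metric.ball (0:ℂ) 1,
      J z = !![(fderiv ℝ F z 1).re, (fderiv ℝ F z Complex.I).re;
               (fderiv ℝ F z 1).im, (fderiv ℝ F z Complex.I).im])
    (hbeltrami : ∀ z ∈ Metric.ball (0:ℂ) 1,
      (fderiv ℝ F z 1 + Complex.I * fderiv ℝ F z Complex.I) / 2 =
        μ z * ((fderiv ℝ F z 1 - Complex.I * fderiv ℝ F z Complex.I) / 2))
    (hk : ∃ k : ℝ, k < 1 ∧ ∀ z ∈ Metric.ball (0:ℂ) 1, ‖μ z‖ ≤ k)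
    (s : ℂ → ℝ) (hs : ∀ z ∈ Metric.ball (0:ℂ) 1, 0 < s z)
    (σ : ℂ → Matrix (Fin 2) (Fin 2) ℝ)
    (hσ : ∀ z ∈ Metric.ball (0:ℂ) 1, σ z = s z • (1 : Matrix (Fin 2) (Fin 2) ℝ))
    (m1 m2 : ℂ → ℝ)
    (hm : ∀ x ∈ Metric.ball (0:ℂ) 1, m2 x ≤ m1 x ∧ 0 < m2 x ∧
      (pushfwdC Finv J σ x).charpoly =
        (X - Polynomial.C (m1 x)) * (X - Polynomial.C (m2 x))) :
    (∀ x ∈ Metric.ball (0:ℂ) 1,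
        aniso (m1 x) (m2 x) = ‖μ (Finv x)‖) ∧
    sSup ((fun x => aniso (m1 x) (m2 x)) '' Metric.ball (0:ℂ) 1) =
      sSup ((fun z => ‖μ z‖) '' Metric.ball (0:ℂ) 1) := by
  obtain ⟨k, hk1, hkμ⟩ := hk
  have hpoint : ∀ x ∈ Metric.ball (0:ℂ) 1, aniso (m1 x) (m2 x) = ‖μ (Finv x)‖ := by
    intro x hx
    obtain ⟨h12, h2, hcp⟩ := hm x hx
    have hz := hFinvmem x hx
    rw [pushfwdC, hσ _ hz, hJ _ hz] at hcp
    exact Complex.aniso_eq_norm_of_charpoly_pushforward (hs _ hz) ((hkμ _ hz).trans_lt hk1)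
      (hbeltrami _ hz) h2 h12 hcp
  have hFinv_image : Finv '' Metric.ball (0:ℂ) 1 = Metric.ball (0:ℂ) 1 := by
    conv_lhs => rw [← hbij.image_eq]
    exact Set.LeftInvOn.image_image hFinv
  refine ⟨hpoint, ?_⟩
  rw [Set.image_congr hpoint, ← Set.image_image (fun z => ‖μ z‖) Finv, hFinv_image]

/-- for a quasiconformal self-map `F` of the unit disk with complex dilatation
`μ_F` and an isotropic conductivity `σ = s·I`, the push-forward `σ̃ = F_*σ` has pointwise
anisotropy `K(σ̃,x) = |μ_F(F⁻¹(x))|`, and hence `K(σ̃) = ‖μ_F‖_∞`. -/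
theorem qc_pushforward_anisotropy
    (F Finv : ℂ → ℂ) (μ : ℂ → ℂ) (J : ℂ → Matrix (Fin 2) (Fin 2) ℝ)
    (hbij : Set.BijOn F (Metric.ball (0:ℂ) 1) (Metric.ball (0:ℂ) 1))
    (hcont : ContinuousOn F (Metric.ball (0:ℂ) 1))
    (hFinv : ∀ z ∈ Metric.ball (0:ℂ) 1, Finv (F z) = z)
    (hFinvmem : ∀ x ∈ Metric.ball (0:ℂ) 1, Finv x ∈ Metric.ball (0:ℂ) 1)
    (hdiff : ∀ z ∈ Metric.ball (0:ℂ) 1, DifferentiableAt ℝ F z)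
    (hJ : ∀ z ∈ Metric.ball (0:ℂ) 1,
      J z = !![(fderiv ℝ F z 1).re, (fderiv ℝ F z Complex.I).re;
               (fderiv ℝ F z 1).im, (fderiv ℝ F z Complex.I).im])
    (hbeltrami : ∀ z ∈ Metric.ball (0:ℂ) 1,
      (fderiv ℝ F z 1 + Complex.I * fderiv ℝ F z Complex.I) / 2 =
        μ z * ((fderiv ℝ F z 1 - Complex.I * fderiv ℝ F z Complex.I) / 2))
    (hk : ∃ k : ℝ, k < 1 ∧ ∀ z ∈ Metric.ball (0:ℂ) 1, ‖μ z‖ ≤ k)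
    (s : ℂ → ℝ) (hs : ∀ z ∈ Metric.ball (0:ℂ) 1, 0 < s z)
    (σ : ℂ → Matrix (Fin 2) (Fin 2) ℝ)
    (hσ : ∀ z ∈ Metric.ball (0:ℂ) 1, σ z = s z • (1 : Matrix (Fin 2) (Fin 2) ℝ))
    (m1 m2 : ℂ → ℝ)
    (hm : ∀ x ∈ Metric.ball (0:ℂ) 1, m2 x ≤ m1 x ∧ 0 < m2 x ∧
      (pushfwdC Finv J σ x).charpoly =
        (X - Polynomial.C (m1 x)) * (X - Polynomial.C (m2 x))) :
    (∀ x ∈ Metric.ball (0:ℂ) 1,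
        aniso (m1 x) (m2 x) = ‖μ (Finv x)‖) ∧
    sSup ((fun x => aniso (m1 x) (m2 x)) '' Metric.ball (0:ℂ) 1) =
      sSup ((fun z => ‖μ z‖) '' Metric.ball (0:ℂ) 1) :=
  qc_pushforward_anisotropy_general F Finv μ J hbij hFinv hFinvmem hJ hbeltrami hk s hs σ hσ m1 m2
    hm
end

section
/- For a symmetric positive definite 2×2 matrix γ with eigenvalues λ₁ ≥ λ₂ > 0, the modulus of its Beltrami coefficient μ = (−γ₁₁ + γ₂₂ − 2iγ₁₂)/(γ₁₁ + γ₂₂ + 2√(det γ)) equals the anisotropy: |μ| = (√(λ₁/λ₂) − 1)/(√(λ₁/λ₂) + 1). -/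
open Matrix Polynomial

/-- The complex Beltrami coefficient of a symmetric 2×2 conductivity matrix. -/
noncomputable def beltramiCoeff (g : Matrix (Fin 2) (Fin 2) ℝ) : ℂ :=
  (-(g 0 0 : ℂ) + (g 1 1 : ℂ) - 2 * Complex.I * (g 0 1 : ℂ)) /
    ((g 0 0 : ℂ) + (g 1 1 : ℂ) + 2 * (Real.sqrt (g 0 0 * g 1 1 - g 0 1 ^ 2) : ℂ))

/-! The numerator of `μ` has modulus `√(tr² − 4 det) = λ₁ − λ₂` and its denominator is
`tr + 2√det = (√λ₁ + √λ₂)²`, so `|μ| = (√λ₁ − √λ₂)/(√λ₁ + √λ₂)`. -/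

namespace Matrix

variable {n R : Type*} [Fintype n] [DecidableEq n] [CommRing R]

theorem charpoly_roots_of_eq_X_sub_C_mul [IsDomain R] {A : Matrix n n R} {a b : R}
    (h : A.charpoly = (X - C a) * (X - C b)) : A.charpoly.roots = {a, b} := by
  simpa [h] using roots_multiset_prod_X_sub_C ({a, b} : Multiset R)

theorem charpoly_splits_of_eq_X_sub_C_mul {A : Matrix n n R} {a b : R}
    (h : A.charpoly = (X - C a) * (X - C b)) : A.charpoly.Splits :=
  h ▸ (Splits.X_sub_C a).mul (Splits.X_sub_C b)

theorem trace_eq_add_of_charpoly_eq [IsDomain R] {A : Matrix n n R} {a b : R}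
    (h : A.charpoly = (X - C a) * (X - C b)) : A.trace = a + b := by
  simp [trace_eq_sum_roots_charpoly_of_splits (charpoly_splits_of_eq_X_sub_C_mul h),
    charpoly_roots_of_eq_X_sub_C_mul h]

theorem det_eq_mul_of_charpoly_eq [IsDomain R] {A : Matrix n n R} {a b : R}
    (h : A.charpoly = (X - C a) * (X - C b)) : A.det = a * b := by
  simp [det_eq_prod_roots_charpoly_of_splits (charpoly_splits_of_eq_X_sub_C_mul h),
    charpoly_roots_of_eq_X_sub_C_mul h]

end Matrix

open Real in
theorem norm_beltramiCoeff {g : Matrix (Fin 2) (Fin 2) ℝ} (hg : g.IsSymm) :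
    ‖beltramiCoeff g‖ = √(g.trace ^ 2 - 4 * g.det) / |g.trace + 2 * √g.det| := by
  have hdet : g.det = g 0 0 * g 1 1 - g 0 1 ^ 2 := by
    rw [det_fin_two, hg.apply 0 1, sq]
  have hnum : -(g 0 0 : ℂ) + g 1 1 - 2 * Complex.I * g 0 1
      = ((g 1 1 - g 0 0 : ℝ) : ℂ) + ((-(2 * g 0 1) : ℝ) : ℂ) * Complex.I := by
    push_cast; ring
  have hden : (g 0 0 : ℂ) + g 1 1 + 2 * (√(g 0 0 * g 1 1 - g 0 1 ^ 2) : ℂ)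
      = ((g.trace + 2 * √g.det : ℝ) : ℂ) := by
    rw [trace_fin_two, hdet]; push_cast; ring
  rw [beltramiCoeff, norm_div, hnum, hden, Complex.norm_add_mul_I, Complex.norm_real,
    Real.norm_eq_abs, trace_fin_two, hdet]
  ring_nf

open Real in
theorem sqrt_discrim_div_eq_anisotropy {l1 l2 : ℝ} (hl : l2 ≤ l1) (hpos : 0 < l2) :
    √((l1 + l2) ^ 2 - 4 * (l1 * l2)) / |l1 + l2 + 2 * √(l1 * l2)| =
      (√(l1 / l2) - 1) / (√(l1 / l2) + 1) := by
  have hl1 : 0 ≤ l1 := hpos.le.trans hl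
  have hnum : √((l1 + l2) ^ 2 - 4 * (l1 * l2)) = l1 - l2 := by
    rw [show (l1 + l2) ^ 2 - 4 * (l1 * l2) = (l1 - l2) ^ 2 by ring,
      sqrt_sq (sub_nonneg.mpr hl)]
  have hden : l1 + l2 + 2 * √(l1 * l2) = (√l1 + √l2) ^ 2 := by
    rw [sqrt_mul hl1, add_sq, sq_sqrt hl1, sq_sqrt hpos.le]; ring
  have hs2 : 0 < √l2 := sqrt_pos.mpr hpos
  rw [hnum, hden, abs_of_nonneg (sq_nonneg _), sqrt_div hl1]
  field_simp
  linear_combination sq_sqrt hpos.le - sq_sqrt hl1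

/-- for a symmetric positive definite 2×2 matrix with eigenvalues
`λ₁ ≥ λ₂ > 0`, `|μ| = (√(λ₁/λ₂) − 1)/(√(λ₁/λ₂) + 1)`. -/
theorem beltrami_abs_eq_anisotropy (g : Matrix (Fin 2) (Fin 2) ℝ) (l1 l2 : ℝ)
    (hsym : g.IsSymm) (hl : l2 ≤ l1) (hpos : 0 < l2)
    (heig : g.charpoly = (X - Polynomial.C l1) * (X - Polynomial.C l2)) :
    ‖beltramiCoeff g‖ =
      (Real.sqrt (l1 / l2) - 1) / (Real.sqrt (l1 / l2) + 1) := by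
  rw [norm_beltramiCoeff hsym, trace_eq_add_of_charpoly_eq heig,
    det_eq_mul_of_charpoly_eq heig]
  exact sqrt_discrim_div_eq_anisotropy hl hpos
end
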